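/- Let (M,F) be a singular Riemannian foliation with closed leaves on a compact, simply-connected Riemannian manifold, and assume the principal part M*_prin of the leaf space is simply-connected. Fix principal leaves L₀ and L of F and two paths γ₀, γ₁: I → M*_prin connecting L₀* to L*. Then the homeomorphism h_{γ₀}: L₀ → L is homotopic to h_{γ₁}: L₀ → L. -/

import Mathlib

open scoped Manifold unitInterval
open Topology

noncomputable section

/-- A singular foliation on a topological space `M`: a partition of `M` into connected
leaves, together with the dimension of the leaf through each point.  This records the
topological content of a singular Riemannian foliation (the metric conditions are part of
the ambient geometric setting). -/
structure SFoliation (M : Type*) [TopologicalSpace M] where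
  rel : M → M → Prop
  iseqv : Equivalence rel
  leafDim : M → ℕ
  leafDim_congr : ∀ {p q : M}, rel p q → leafDim p = leafDim q
  leaf_connected : ∀ p : M, IsConnected {q : M | rel p q}

namespace SFoliation

variable {M : Type*} [TopologicalSpace M] (F : SFoliation M)

/-- The leaf through `p`. -/
def leaf (p : M) : Set M := {q : M | F.rel p q}

lemma mem_leaf_self (p : M) : p ∈ F.leaf p := F.iseqv.refl p

/-- The setoid given by the partition into leaves. -/
def toSetoid : Setoid M := ⟨F.rel, F.iseqv⟩

/-- The leaf space `M/F`, with the quotient topology. -/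
def LeafSpace : Type _ := Quotient F.toSetoid

instance : TopologicalSpace F.LeafSpace := instTopologicalSpaceQuotient

/-- The leaf projection map. -/
def proj (p : M) : F.LeafSpace := Quotient.mk F.toSetoid p

lemma continuous_proj : Continuous F.proj := continuous_quotient_mk'

/-- The dimension of the foliation: the maximal dimension of its leaves. -/
def dim : ℕ := ⨆ p : M, F.leafDim p

/-- A point lies on a regular leaf if its leaf has maximal dimension. -/
def IsRegular (p : M) : Prop := ∀ q : M, F.leafDim q ≤ F.leafDim p

/-- A set is saturated if it is a union of leaves. -/
def Saturated (U : Set M) : Prop := ∀ p ∈ U, F.leaf p ⊆ U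

/-- A point lies on a principal leaf if its leaf is regular and has trivial holonomy,
encoded here by the existence of a saturated open product (foliated) trivialization
around the leaf. -/
def IsPrincipal (p : M) : Prop :=
  F.IsRegular p ∧
    ∃ U : Set M, IsOpen U ∧ p ∈ U ∧ F.Saturated U ∧
      ∃ e : ↥U ≃ₜ ↥(F.leaf p) × ↥(F.proj '' U),
        ∀ x : U, ((e x).2 : F.LeafSpace) = F.proj (x : M)

/-- The principal stratum: the union of the principal leaves. -/
def Mprin : Set M := {p : M | F.IsPrincipal p}

/-- A continuous cross-section of the leaf projection. -/
def IsCrossSection (sec : C(F.LeafSpace, M)) : Prop := ∀ x : F.LeafSpace, F.proj (sec x) = x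

end SFoliation

/-- A topological space is aspherical if all its homotopy groups in degrees `≥ 2` vanish. -/
def Aspherical (X : Type*) [TopologicalSpace X] : Prop :=
  ∀ n : ℕ, 2 ≤ n → ∀ x : X, Subsingleton (HomotopyGroup (Fin n) X x)

/-- An A-foliation: a singular (Riemannian) foliation all of whose leaves are closed
and aspherical. -/
structure SFoliation.IsAFoliation {M : Type*} [TopologicalSpace M] (F : SFoliation M) : Prop where
  isClosed_leaf : ∀ p : M, IsClosed (F.leaf p)
  aspherical_leaf : ∀ p : M, Aspherical (F.leaf p)

/-- The standard `n`-torus `S¹ × ⋯ × S¹`. -/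
abbrev Torus (n : ℕ) : Type := Fin n → Circle

/-- A foliated homeomorphism: a homeomorphism sending leaves onto leaves. -/
structure FoliatedHomeo {M₁ M₂ : Type*} [TopologicalSpace M₁] [TopologicalSpace M₂]
    (F₁ : SFoliation M₁) (F₂ : SFoliation M₂) extends M₁ ≃ₜ M₂ where
  leaf_rel : ∀ p q : M₁, F₁.rel p q ↔ F₂.rel (toHomeomorph p) (toHomeomorph q)

section ExpData

variable {M : Type*} [TopologicalSpace M]

/-- Abstract normal exponential data along the leaf `L_p` of a singular foliation:
for each point `x` of the leaf, a map `exp x` from the normal space at `x`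
(identified with `ℝᵏ`) into `M`. -/
structure LeafExpData (F : SFoliation M) (p : M) (k : ℕ) where
  exp : F.leaf p → EuclideanSpace ℝ (Fin k) → M
  exp_zero : ∀ x : F.leaf p, exp x 0 = (x : M)
  continuous_exp : ∀ x : F.leaf p, Continuous (exp x)

/-- The leaf of the infinitesimal foliation `F^p` (at the point `x` of the leaf `L_p`)
through the normal vector `v`: the connected component containing `v` of the preimage,
under the normal exponential map, of the leaf of `F` through `exp x v`. -/
def LeafExpData.infLeaf {F : SFoliation M} {p : M} {k : ℕ} (E : LeafExpData F p k)
    (x : F.leaf p) (v : EuclideanSpace ℝ (Fin k)) : Set (EuclideanSpace ℝ (Fin k)) :=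
  connectedComponentIn ((E.exp x) ⁻¹' (F.leaf (E.exp x v))) v

/-- Sliding data along a curve `γ` in the leaf `L_p` (Mendes–Radeschi): a continuous
family of linear isometries of the normal spaces, starting at the identity, preserving
the infinitesimal foliations, and such that `exp_{γ t} (s • G t v)` stays in the leaf
of `exp_{γ 0} (s • v)`. -/
structure Sliding {F : SFoliation M} {p : M} {k : ℕ} (E : LeafExpData F p k)
    {x y : F.leaf p} (γ : Path x y) where
  G : unitInterval → (EuclideanSpace ℝ (Fin k) ≃ₗᵢ[ℝ] EuclideanSpace ℝ (Fin k))
  G_zero : G 0 = LinearIsometryEquiv.refl ℝ (EuclideanSpace ℝ (Fin k))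
  continuous_G : Continuous fun tv : unitInterval × EuclideanSpace ℝ (Fin k) => G tv.1 tv.2
  foliated : ∀ (t : unitInterval) (v : EuclideanSpace ℝ (Fin k)),
    (G t) '' (E.infLeaf x v) = E.infLeaf (γ t) (G t v)
  slides : ∀ (t : unitInterval) (s : ℝ) (v : EuclideanSpace ℝ (Fin k)),
    F.rel (E.exp (γ t) (s • (G t v))) (E.exp x (s • v))

end ExpData

/-- The continuous map `h` from the principal leaf `L₀` (through `p₀`) into `M` is
induced by horizontal lifts of the path `γ` in the principal part `M*_prin` of the leaf
space: for each `x ∈ L₀` there is a lift of `γ` starting at `x` and ending at `h x`,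
depending continuously on `x`. -/
def SFoliation.InducedByLift {M : Type*} [TopologicalSpace M] (F : SFoliation M) {p₀ : M}
    {a b : ↥(F.proj '' F.Mprin)} (γ : Path a b) (h : C(↥(F.leaf p₀), M)) : Prop :=
  ∃ δ : ↥(F.leaf p₀) → unitInterval → M,
    (Continuous fun xt : ↥(F.leaf p₀) × unitInterval => δ xt.1 xt.2) ∧
    (∀ x : ↥(F.leaf p₀), δ x 0 = (x : M)) ∧
    (∀ x : ↥(F.leaf p₀), δ x 1 = h x) ∧
    (∀ (x : ↥(F.leaf p₀)) (t : unitInterval), F.proj (δ x t) = (γ t : F.LeafSpace))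

/-- The inclusion of a leaf into the ambient space, as a continuous map. -/
def SFoliation.leafIncl {M : Type*} [TopologicalSpace M] (F : SFoliation M) (q : M) :
    C(↥(F.leaf q), M) :=
  ⟨Subtype.val, continuous_subtype_val⟩

/-!
Since `M*_prin` is simply connected, the loop `γ₀⁻¹ · γ₁` at `L*` is null-homotopic rel endpoints,
say by `K : I × I → M*_prin` with `K (0, ·)` the loop and `K = L*` on the other three edges.
Concatenating the horizontal lifts gives, for each `x ∈ L₀`, a lift of the loop from `h_{γ₀} x` to
`h_{γ₁} x`. Principal leaves have product neighbourhoods, so the leaf projection is locally trivial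
over `M*_prin`, and `K` lifts, continuously in `x`, with these prescribed values on the edges
`{0} × I ∪ I × {0}`: cut the square into cells mapped into trivializing charts and extend the lift
cell by cell, retracting each cell onto its left and bottom edges. The lift of the two remaining
edges lies over `L*`, hence in `L`, and runs from `h_{γ₀}` to `h_{γ₁}`.
-/

open Set

universe u

section Lifting

variable {E : Type u} {B Z X : Type*} [TopologicalSpace E] [TopologicalSpace Z]
  [TopologicalSpace X]

def IsTrivialOver [TopologicalSpace B] (p : E → B) (V : Set B) : Prop :=
  IsOpen V ∧ ∃ (Φ : Type u) (_ : TopologicalSpace Φ) (e : p ⁻¹' V ≃ₜ Φ × V),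
    ∀ y, ((e y).2 : B) = p y

theorem IsTrivialOver.exists_transport [TopologicalSpace B] {p : E → B} {V : Set B}
    (hV : IsTrivialOver p V) :
    ∃ τ : E → B → E, ContinuousOn (fun q : E × B => τ q.1 q.2) ((p ⁻¹' V) ×ˢ V) ∧
      (∀ y b, p y ∈ V → b ∈ V → p (τ y b) = b) ∧ ∀ y, p y ∈ V → τ y (p y) = y := by
  classical
  obtain ⟨-, Φ, _, e, he⟩ := hV
  let τ : E → B → E := fun y b =>
    if h : p y ∈ V ∧ b ∈ V then e.symm ((e ⟨y, h.1⟩).1, ⟨b, h.2⟩) else y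
  refine ⟨τ, ?_, fun y b hy hb => ?_, fun y hy => ?_⟩
  · rw [continuousOn_iff_continuous_domRestrict]
    have : Continuous fun q : ↥((p ⁻¹' V) ×ˢ V) =>
        (e.symm ((e ⟨q.1.1, q.2.1⟩).1, ⟨q.1.2, q.2.2⟩) : E) := by fun_prop
    refine this.congr fun q => ?_
    simp only [domRestrict_apply, τ]
    rw [dif_pos (show p q.1.1 ∈ V ∧ q.1.2 ∈ V from q.2)]
  · simp only [τ, dif_pos (And.intro hy hb)]
    rw [← he, e.apply_symm_apply]
  · simp only [τ, dif_pos (And.intro hy hy)]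
    have : (⟨p y, hy⟩ : V) = (e ⟨y, hy⟩).2 := Subtype.ext (he ⟨y, hy⟩).symm
    rw [this, Prod.mk.eta, e.symm_apply_apply]

structure IsLiftOn (p : E → B) (g : Z → B) (f : Z × X → E) (S : Set Z) : Prop where
  continuousOn : ContinuousOn f (S ×ˢ univ)
  lift : ∀ z ∈ S, ∀ x, p (f (z, x)) = g z

theorem IsLiftOn.mono {p : E → B} {g : Z → B} {f : Z × X → E} {S T : Set Z}
    (hf : IsLiftOn p g f S) (hTS : T ⊆ S) : IsLiftOn p g f T :=
  ⟨hf.continuousOn.mono (prod_mono hTS subset_rfl), fun z hz => hf.lift z (hTS hz)⟩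

/-- In a trivializing chart, a partial lift extends from `S` to `S ∪ D` as soon as `D ∩ S` is a
retract of `D`: transport the lift at the retracted point to the fibre over `g z`. -/
theorem IsLiftOn.exists_extend [TopologicalSpace B] {p : E → B} {g : Z → B} {f : Z × X → E}
    {S D : Set Z} {V : Set B} {ρ : Z → Z} (hf : IsLiftOn p g f S) (hS : IsClosed S)
    (hD : IsClosed D) (hg : ContinuousOn g D) (hV : IsTrivialOver p V) (hgV : MapsTo g D V)
    (hρ : ContinuousOn ρ D) (hρD : MapsTo ρ D (D ∩ S)) (hρS : EqOn ρ id (D ∩ S)) :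
    ∃ f', IsLiftOn p g f' (S ∪ D) ∧ EqOn f' f (S ×ˢ univ) := by
  classical
  obtain ⟨τ, hτ, hτp, hτself⟩ := hV.exists_transport
  let f' : Z × X → E := fun q => if q.1 ∈ D then τ (f (ρ q.1, q.2)) (g q.1) else f q
  have hρf : ∀ z ∈ D, ∀ x, p (f (ρ z, x)) = g (ρ z) := fun z hz x =>
    hf.lift _ (hρD hz).2 x
  have hagree : EqOn f' f (S ×ˢ univ) := by
    rintro ⟨z, x⟩ ⟨hzS, -⟩
    by_cases hzD : z ∈ D
    · have hfix : ρ z = z := hρS ⟨hzD, hzS⟩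
      simp only [f', if_pos hzD, hfix, ← hf.lift z hzS x]
      exact hτself _ (by rw [hf.lift z hzS x]; exact hgV hzD)
    · simp only [f', if_neg hzD]
  have hcontD : ContinuousOn f' (D ×ˢ univ) := by
    have hpair : ContinuousOn (fun q : Z × X => (ρ q.1, q.2)) (D ×ˢ univ) :=
      (hρ.comp continuousOn_fst fun q hq => hq.1).prodMk continuousOn_snd
    have hinner : ContinuousOn (fun q : Z × X => (f (ρ q.1, q.2), g q.1)) (D ×ˢ univ) :=
      (hf.continuousOn.comp hpair fun q hq => ⟨(hρD hq.1).2, trivial⟩).prodMk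
        (hg.comp continuousOn_fst fun q hq => hq.1)
    refine (hτ.comp hinner fun q hq => ⟨?_, hgV hq.1⟩).congr fun q hq => ?_
    · show p (f (ρ q.1, q.2)) ∈ V
      rw [hρf _ hq.1]
      exact hgV (hρD hq.1).1
    · simp only [f', if_pos hq.1, Function.comp]
  refine ⟨f', ⟨?_, fun z hz x => ?_⟩, hagree⟩
  · rw [union_prod]
    exact (hf.continuousOn.congr hagree).union_of_isClosed hcontD
      (hS.prod isClosed_univ) (hD.prod isClosed_univ)
  · by_cases hzD : z ∈ D
    · simp only [f', if_pos hzD]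
      exact hτp _ _ (by rw [hρf z hzD]; exact hgV (hρD hzD).1) (hgV hzD)
    · have hzS : z ∈ S := hz.resolve_right hzD
      rw [hagree ⟨hzS, trivial⟩]
      exact hf.lift z hzS x

end Lifting

section UnitSquare

def leftBottomEdges : Set (I × I) := {z | z.1 = 0 ∨ z.2 = 0}

def rightTopEdges : Set (I × I) := {z | z.1 = 1 ∨ z.2 = 1}

def gridCell (n i j : ℕ) : Set (I × I) :=
  {z | (z.1 : ℝ) ∈ Icc (i / n : ℝ) ((i + 1) / n) ∧ (z.2 : ℝ) ∈ Icc (j / n : ℝ) ((j + 1) / n)}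

/-- The left edge together with the cells of the rows below `j` and the first `i` cells of row `j`
(cells of side `1 / n`). -/
def gridRegion (n i j : ℕ) : Set (I × I) :=
  {z | z.1 = 0 ∨ (z.2 : ℝ) ≤ j / n ∨ ((z.1 : ℝ) ≤ i / n ∧ (z.2 : ℝ) ≤ (j + 1) / n)}

theorem isClosed_gridCell (n i j : ℕ) : IsClosed (gridCell n i j) :=
  (isClosed_Icc.preimage (by fun_prop : Continuous fun z : I × I => (z.1 : ℝ))).inter
    (isClosed_Icc.preimage (by fun_prop : Continuous fun z : I × I => (z.2 : ℝ)))

theorem isClosed_gridRegion (n i j : ℕ) : IsClosed (gridRegion n i j) := by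
  have h₁ : Continuous fun z : I × I => (z.1 : ℝ) := by fun_prop
  have h₂ : Continuous fun z : I × I => (z.2 : ℝ) := by fun_prop
  exact (isClosed_eq continuous_fst continuous_const).union
    ((isClosed_le h₂ continuous_const).union
      ((isClosed_le h₁ continuous_const).inter (isClosed_le h₂ continuous_const)))

theorem gridRegion_zero_zero_subset (n : ℕ) : gridRegion n 0 0 ⊆ leftBottomEdges := by
  rintro z (h | h | ⟨h, -⟩)
  · exact Or.inl h
  · exact Or.inr (Subtype.ext (le_antisymm (by simpa using h) z.2.2.1))
  · exact Or.inl (Subtype.ext (le_antisymm (by simpa using h) z.1.2.1))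

theorem leftBottomEdges_subset_gridRegion (n i j : ℕ) : leftBottomEdges ⊆ gridRegion n i j := by
  rintro z (h | h)
  · exact Or.inl h
  · exact Or.inr (Or.inl (by rw [h]; positivity))

theorem gridRegion_succ_subset (n i j : ℕ) :
    gridRegion n (i + 1) j ⊆ gridRegion n i j ∪ gridCell n i j := by
  rintro z (h | h | ⟨h₁, h₂⟩)
  · exact Or.inl (Or.inl h)
  · exact Or.inl (Or.inr (Or.inl h))
  by_cases hz₁ : (z.1 : ℝ) ≤ i / n
  · exact Or.inl (Or.inr (Or.inr ⟨hz₁, h₂⟩))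
  by_cases hz₂ : (z.2 : ℝ) ≤ j / n
  · exact Or.inl (Or.inr (Or.inl hz₂))
  push_cast at h₁
  exact Or.inr ⟨⟨(not_le.1 hz₁).le, h₁⟩, ⟨(not_le.1 hz₂).le, h₂⟩⟩

theorem gridRegion_zero_succ_subset {n : ℕ} (hn : 0 < n) (j : ℕ) :
    gridRegion n 0 (j + 1) ⊆ gridRegion n n j := by
  have hn' : (n : ℝ) / n = 1 := div_self (by positivity)
  rintro z (h | h | ⟨h, -⟩)
  · exact Or.inl h
  · push_cast at h
    exact Or.inr (Or.inr ⟨hn' ▸ z.1.2.2, h⟩)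
  · exact Or.inl (Subtype.ext (le_antisymm (by simpa using h) z.1.2.1))

theorem gridRegion_zero_self {n : ℕ} (hn : 0 < n) : gridRegion n 0 n = univ :=
  eq_univ_of_forall fun z => Or.inr (Or.inl (by rw [div_self (by positivity)]; exact z.2.2.2))

/-- Slides `z` diagonally down onto the lines `x = a` or `y = b`, whichever it meets first. -/
def cornerRetraction (a b : ℝ) (z : I × I) : I × I :=
  (projIcc 0 1 zero_le_one (z.1 - min (z.1 - a) (z.2 - b)),
    projIcc 0 1 zero_le_one (z.2 - min (z.1 - a) (z.2 - b)))

theorem continuous_cornerRetraction (a b : ℝ) : Continuous (cornerRetraction a b) := by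
  unfold cornerRetraction; fun_prop

theorem coe_cornerRetraction {a b : ℝ} (ha : 0 ≤ a) (hb : 0 ≤ b) {z : I × I}
    (hza : a ≤ z.1) (hzb : b ≤ z.2) :
    ((cornerRetraction a b z).1 : ℝ) = z.1 - min (z.1 - a) (z.2 - b) ∧
      ((cornerRetraction a b z).2 : ℝ) = z.2 - min (z.1 - a) (z.2 - b) := by
  have h₁ := min_le_left (z.1 - a : ℝ) (z.2 - b)
  have h₂ := min_le_right (z.1 - a : ℝ) (z.2 - b)
  have h₀ : 0 ≤ min (z.1 - a : ℝ) (z.2 - b) := le_min (by linarith) (by linarith)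
  have hz₁ := z.1.2.2
  have hz₂ := z.2.2.2
  constructor <;>
  · rw [cornerRetraction, coe_projIcc, min_eq_right (by linarith), max_eq_right (by linarith)]

theorem mapsTo_cornerRetraction_gridCell (n i j : ℕ) :
    MapsTo (cornerRetraction (i / n) (j / n)) (gridCell n i j)
      (gridCell n i j ∩ gridRegion n i j) := by
  rintro z ⟨⟨hz₁, hz₁'⟩, ⟨hz₂, hz₂'⟩⟩
  obtain ⟨e₁, e₂⟩ := coe_cornerRetraction (by positivity) (by positivity) hz₁ hz₂
  have h₁ := min_le_left (z.1 - i / n : ℝ) (z.2 - j / n)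
  have h₂ := min_le_right (z.1 - i / n : ℝ) (z.2 - j / n)
  have h₀ : 0 ≤ min (z.1 - i / n : ℝ) (z.2 - j / n) := le_min (by linarith) (by linarith)
  refine ⟨⟨⟨by rw [e₁]; linarith, by rw [e₁]; linarith⟩,
    ⟨by rw [e₂]; linarith, by rw [e₂]; linarith⟩⟩, ?_⟩
  rcases min_choice (z.1 - i / n : ℝ) (z.2 - j / n) with h | h
  · exact Or.inr (Or.inr ⟨by rw [e₁, h]; linarith, by rw [e₂]; linarith⟩)
  · exact Or.inr (Or.inl (by rw [e₂, h]; linarith))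

theorem eqOn_cornerRetraction_gridCell (n i j : ℕ) :
    EqOn (cornerRetraction (i / n) (j / n)) id (gridCell n i j ∩ gridRegion n i j) := by
  rintro z ⟨⟨⟨hz₁, -⟩, ⟨hz₂, -⟩⟩, hzR⟩
  obtain ⟨e₁, e₂⟩ := coe_cornerRetraction (by positivity) (by positivity) hz₁ hz₂
  have hm : min (z.1 - i / n : ℝ) (z.2 - j / n) = 0 := by
    refine le_antisymm ?_ (le_min (by linarith) (by linarith))
    rcases hzR with h | h | ⟨h, -⟩
    · exact (min_le_left _ _).trans (by rw [h, Icc.coe_zero, zero_sub, neg_nonpos]; positivity)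
    · exact (min_le_right _ _).trans (by linarith)
    · exact (min_le_left _ _).trans (by linarith)
  rw [hm, sub_zero] at e₁ e₂
  exact Prod.ext (Subtype.ext e₁) (Subtype.ext e₂)

theorem exists_gridCell_subset {ι : Type*} {c : ι → Set (I × I)} (hc : ∀ k, IsOpen (c k))
    (hcov : ∀ z, ∃ k, z ∈ c k) : ∃ n : ℕ, 0 < n ∧ ∀ i j : ℕ, ∃ k, gridCell n i j ⊆ c k := by
  obtain ⟨δ, hδ, hball⟩ := lebesgue_number_lemma_of_metric isCompact_univ hc
    (fun z _ => mem_iUnion.2 (hcov z))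
  obtain ⟨n, hn⟩ := exists_nat_one_div_lt hδ
  refine ⟨n + 1, n.succ_pos, fun i j => ?_⟩
  rcases (gridCell (n + 1) i j).eq_empty_or_nonempty with h | ⟨w, hw⟩
  · exact ⟨(hcov (0, 0)).choose, h.symm ▸ empty_subset _⟩
  obtain ⟨k, hk⟩ := hball w trivial
  refine ⟨k, fun z hz => hk ?_⟩
  have hside : ∀ m : ℕ, ((m + 1) / (n + 1 : ℕ) : ℝ) - m / (n + 1 : ℕ) < δ := fun m => by
    rw [← sub_div]; push_cast; simpa using hn
  rw [Metric.mem_ball, Prod.dist_eq, max_lt_iff, Subtype.dist_eq, Subtype.dist_eq]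
  exact ⟨(Real.dist_le_of_mem_Icc hz.1 hw.1).trans_lt (hside i),
    (Real.dist_le_of_mem_Icc hz.2 hw.2).trans_lt (hside j)⟩

end UnitSquare

section SquareLifting

variable {E : Type u} {B X : Type*} [TopologicalSpace E] [TopologicalSpace B]
  [TopologicalSpace X] {p : E → B} {g : I × I → B}

theorem IsLiftOn.exists_extend_gridCell {f : (I × I) × X → E} {n i j : ℕ} {V : Set B}
    (hf : IsLiftOn p g f (gridRegion n i j)) (hg : Continuous g) (hV : IsTrivialOver p V)
    (hgV : MapsTo g (gridCell n i j) V) :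
    ∃ f', IsLiftOn p g f' (gridRegion n (i + 1) j) ∧ EqOn f' f (gridRegion n i j ×ˢ univ) := by
  obtain ⟨f', hf', heq⟩ := hf.exists_extend (isClosed_gridRegion n i j) (isClosed_gridCell n i j)
    hg.continuousOn hV hgV (continuous_cornerRetraction _ _).continuousOn
    (mapsTo_cornerRetraction_gridCell n i j) (eqOn_cornerRetraction_gridCell n i j)
  exact ⟨f', hf'.mono (gridRegion_succ_subset n i j), heq⟩

theorem exists_lift_of_leftBottomEdges (hg : Continuous g)
    (htriv : ∀ z, ∃ V, IsTrivialOver p V ∧ g z ∈ V) {f₀ : (I × I) × X → E}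
    (hf₀ : Continuous f₀) (hf₀g : ∀ z ∈ leftBottomEdges, ∀ x, p (f₀ (z, x)) = g z) :
    ∃ f : (I × I) × X → E, Continuous f ∧ (∀ z x, p (f (z, x)) = g z) ∧
      EqOn f f₀ (leftBottomEdges ×ˢ univ) := by
  choose V hV hgV using htriv
  obtain ⟨n, hn, hcell⟩ := exists_gridCell_subset (fun z => (hV z).1.preimage hg)
    fun z => ⟨z, hgV z⟩
  let Extends (S : Set (I × I)) : Prop :=
    ∃ f, IsLiftOn p g f S ∧ EqOn f f₀ (leftBottomEdges ×ˢ univ)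
  have hrow : ∀ j, Extends (gridRegion n 0 j) → ∀ i, Extends (gridRegion n i j) := by
    intro j h₀ i
    induction i with
    | zero => exact h₀
    | succ i ih =>
      obtain ⟨f, hf, hff₀⟩ := ih
      obtain ⟨k, hk⟩ := hcell i j
      obtain ⟨f', hf', heq⟩ := hf.exists_extend_gridCell hg (hV k) hk
      exact ⟨f', hf', (heq.mono (prod_mono (leftBottomEdges_subset_gridRegion n i j)
        subset_rfl)).trans hff₀⟩
  have hcol : ∀ j, Extends (gridRegion n 0 j) := by
    intro j
    induction j with
    | zero =>
      have hbase : IsLiftOn p g f₀ leftBottomEdges := ⟨hf₀.continuousOn, hf₀g⟩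
      exact ⟨f₀, hbase.mono (gridRegion_zero_zero_subset n), eqOn_refl _ _⟩
    | succ j ih =>
      obtain ⟨f, hf, hff₀⟩ := hrow j ih n
      exact ⟨f, hf.mono (gridRegion_zero_succ_subset hn j), hff₀⟩
  obtain ⟨f, hf, hff₀⟩ := hcol n
  rw [gridRegion_zero_self hn] at hf
  exact ⟨f, continuousOn_univ.1 (by simpa using hf.continuousOn), fun z => hf.lift z trivial,
    hff₀⟩

end SquareLifting

theorem ContinuousMap.Homotopic.of_rightTopEdges {X Y : Type*} [TopologicalSpace X]
    [TopologicalSpace Y] {T : Set Y} {f : (I × I) × X → Y} (hf : Continuous f)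
    (hT : ∀ z ∈ rightTopEdges, ∀ x, f (z, x) ∈ T) {k₀ k₁ : C(X, T)}
    (hk₀ : ∀ x, f ((1, 0), x) = k₀ x) (hk₁ : ∀ x, f ((0, 1), x) = k₁ x) : k₀.Homotopic k₁ := by
  let c : I → I × I := fun r =>
    (projIcc 0 1 zero_le_one (2 - 2 * r), projIcc 0 1 zero_le_one (2 * r))
  have hc : ∀ r, c r ∈ rightTopEdges := fun r => by
    rcases le_total (r : ℝ) (1 / 2) with h | h
    · exact Or.inl (Subtype.ext (by
        simp [c, projIcc_of_right_le, show (1 : ℝ) ≤ 2 - 2 * r by linarith]))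
    · exact Or.inr (Subtype.ext (by
        simp [c, projIcc_of_right_le, show (1 : ℝ) ≤ 2 * r by linarith]))
  refine ⟨{ toFun := fun q => ⟨f (c q.1, q.2), hT _ (hc q.1) _⟩
            continuous_toFun := by fun_prop
            map_zero_left := fun x => Subtype.ext ?_
            map_one_left := fun x => Subtype.ext ?_ }⟩
  · simpa [c, projIcc_of_right_le, projIcc_of_le_left] using hk₀ x
  · simpa [c, projIcc_of_right_le, projIcc_of_le_left] using hk₁ x

theorem Path.Homotopy.eq_of_mem_rightTopEdges {Y : Type*} [TopologicalSpace Y] {b : Y}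
    {γ : Path b b} (K : Path.Homotopy γ (Path.refl b)) {z : I × I} (hz : z ∈ rightTopEdges) :
    K z = b := by
  obtain ⟨u, s⟩ := z
  rcases hz with (rfl : u = 1) | (rfl : s = 1)
  · exact K.apply_one s
  · exact K.target u

namespace SFoliation

variable {M : Type*} [TopologicalSpace M] {F : SFoliation M}

theorem IsPrincipal.exists_isTrivialOver {q : M} (hq : F.IsPrincipal q) :
    ∃ V, IsTrivialOver F.proj V ∧ F.proj q ∈ V := by
  obtain ⟨-, U, hUo, hqU, hsat, e, he⟩ := hq
  have hpre : F.proj ⁻¹' (F.proj '' U) = U :=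
    Subset.antisymm (fun y ⟨w, hw, hwy⟩ => hsat w hw (Quotient.exact hwy))
      (subset_preimage_image _ _)
  have hVo : IsOpen (F.proj '' U) := by
    have hquot : IsQuotientMap F.proj := isQuotientMap_quot_mk
    rw [← hquot.isOpen_preimage, hpre]
    exact hUo
  exact ⟨F.proj '' U, ⟨hVo, _, _, (Homeomorph.setCongr hpre).trans e, fun y => he _⟩,
    mem_image_of_mem _ hqU⟩

theorem InducedByLift.exists_lift_symm_trans {p₀ : M} {a b : ↥(F.proj '' F.Mprin)}
    {γ₀ γ₁ : Path a b} {h₀ h₁ : C(↥(F.leaf p₀), M)} (hh₀ : F.InducedByLift γ₀ h₀)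
    (hh₁ : F.InducedByLift γ₁ h₁) :
    ∃ κ : ↥(F.leaf p₀) × I → M, Continuous κ ∧ (∀ x, κ (x, 0) = h₀ x) ∧
      (∀ x, κ (x, 1) = h₁ x) ∧
      ∀ x s, F.proj (κ (x, s)) = ((γ₀.symm.trans γ₁ s : ↥(F.proj '' F.Mprin)) : F.LeafSpace) := by
  obtain ⟨δ₀, hδ₀, hδ₀0, hδ₀1, hδ₀p⟩ := hh₀
  obtain ⟨δ₁, hδ₁, hδ₁0, hδ₁1, hδ₁p⟩ := hh₁
  let P₀ (x : ↥(F.leaf p₀)) : Path (x : M) (h₀ x) :=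
    ⟨⟨δ₀ x, hδ₀.comp (Continuous.prodMk_right x)⟩, hδ₀0 x, hδ₀1 x⟩
  let P₁ (x : ↥(F.leaf p₀)) : Path (x : M) (h₁ x) :=
    ⟨⟨δ₁ x, hδ₁.comp (Continuous.prodMk_right x)⟩, hδ₁0 x, hδ₁1 x⟩
  refine ⟨fun q => (P₀ q.1).symm.trans (P₁ q.1) q.2,
    Path.trans_continuous_family _ (Path.symm_continuous_family P₀ hδ₀) P₁ hδ₁,
    fun x => Path.source _, fun x => Path.target _, fun x s => ?_⟩
  simp only [Path.trans_apply, Path.symm_apply]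
  split_ifs
  · exact hδ₀p x _
  · exact hδ₁p x _

end SFoliation

theorem lift_homeos_homotopic_general
    {M : Type*} [TopologicalSpace M]
    (F : SFoliation M)
    (hsc : SimplyConnectedSpace ↥(F.proj '' F.Mprin))
    {p₀ l : M}
    {a b : ↥(F.proj '' F.Mprin)}
    (hb : (b : F.LeafSpace) = F.proj l)
    (γ₀ γ₁ : Path a b)
    (h₀ h₁ : ↥(F.leaf p₀) ≃ₜ ↥(F.leaf l))
    (hh₀ : F.InducedByLift γ₀ ((F.leafIncl l).comp (h₀ : C(↥(F.leaf p₀), ↥(F.leaf l)))))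
    (hh₁ : F.InducedByLift γ₁ ((F.leafIncl l).comp (h₁ : C(↥(F.leaf p₀), ↥(F.leaf l))))) :
    ContinuousMap.Homotopic (h₀ : C(↥(F.leaf p₀), ↥(F.leaf l))) (h₁ : C(↥(F.leaf p₀), ↥(F.leaf l))) := by
  obtain ⟨κ, hκ, hκ0, hκ1, hκp⟩ := hh₀.exists_lift_symm_trans hh₁
  obtain ⟨K⟩ := SimplyConnectedSpace.paths_homotopic (γ₀.symm.trans γ₁) (Path.refl b)
  have htriv (z : I × I) : ∃ V, IsTrivialOver F.proj V ∧ (K z : F.LeafSpace) ∈ V := by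
    obtain ⟨q, hq, hqz⟩ := (K z).2
    exact hqz ▸ SFoliation.IsPrincipal.exists_isTrivialOver hq
  have hedges : ∀ z ∈ leftBottomEdges, ∀ x, F.proj (κ (x, z.2)) = K z := by
    rintro ⟨u, s⟩ (rfl | rfl : u = 0 ∨ s = 0) x
    · rw [hκp, K.apply_zero]
      rfl
    · rw [hκp, K.source, Path.source]
  obtain ⟨f, hf, hfK, hfκ⟩ := exists_lift_of_leftBottomEdges (g := fun z => (K z : F.LeafSpace))
    (continuous_subtype_val.comp K.continuous) htriv (f₀ := fun q => κ (q.2, q.1.2))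
    (by fun_prop) hedges
  refine ContinuousMap.Homotopic.of_rightTopEdges hf (fun z hz x => ?_) (fun x => ?_)
    (fun x => ?_)
  · have : F.proj (f (z, x)) = F.proj l := by rw [hfK, K.eq_of_mem_rightTopEdges hz, hb]
    exact Quotient.exact this.symm
  · exact (hfκ ⟨Or.inr rfl, trivial⟩).trans (hκ0 x)
  · exact (hfκ ⟨Or.inl rfl, trivial⟩).trans (hκ1 x)

/-- Let `(M, F)` be a singular Riemannian foliation with closed leaves on
a compact, simply-connected Riemannian manifold, and assume the principal part `M*_prin`
of the leaf space is simply-connected.  Fix principal leaves `L₀` and `L` of `F` and two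
paths `γ₀, γ₁ : I → M*_prin` connecting `L₀*` to `L*`.  Then the homeomorphism
`h_{γ₀} : L₀ → L` (induced by horizontal lifts of `γ₀`) is homotopic to the homeomorphism
`h_{γ₁} : L₀ → L` (induced by horizontal lifts of `γ₁`). -/
theorem lift_homeos_homotopic
    {M : Type*} [TopologicalSpace M] [CompactSpace M] [SimplyConnectedSpace M]
    (F : SFoliation M)
    (hclosed : ∀ p : M, IsClosed (F.leaf p))
    (hsc : SimplyConnectedSpace ↥(F.proj '' F.Mprin))
    {p₀ l : M} (hp₀ : F.IsPrincipal p₀) (hl : F.IsPrincipal l)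
    {a b : ↥(F.proj '' F.Mprin)}
    (ha : (a : F.LeafSpace) = F.proj p₀) (hb : (b : F.LeafSpace) = F.proj l)
    (γ₀ γ₁ : Path a b)
    (h₀ h₁ : ↥(F.leaf p₀) ≃ₜ ↥(F.leaf l))
    (hh₀ : F.InducedByLift γ₀ ((F.leafIncl l).comp (h₀ : C(↥(F.leaf p₀), ↥(F.leaf l)))))
    (hh₁ : F.InducedByLift γ₁ ((F.leafIncl l).comp (h₁ : C(↥(F.leaf p₀), ↥(F.leaf l))))) :
    ContinuousMap.Homotopic (h₀ : C(↥(F.leaf p₀), ↥(F.leaf l))) (h₁ : C(↥(F.leaf p₀), ↥(F.leaf l))) :=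
  lift_homeos_homotopic_general F hsc hb γ₀ γ₁ h₀ h₁ hh₀ hh₁
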